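/- Let μ be a stable matching and μ' a 1-envy-free matching in the same finite many-to-one matching market with strict preferences. Then exactly one of the following holds: (Case 1) |μ⁻¹(j)| = |μ'⁻¹(j)| for every college j; (Case 2) there is exactly one college j* with |μ⁻¹(j*)| = |μ'⁻¹(j*)| + 1, and |μ⁻¹(j)| = |μ'⁻¹(j)| for all j ≠ j*. -/

import Mathlib

attribute [local instance] Classical.propDecidable

noncomputable section

/-- A many-to-one college admissions market (college admissions model) with `n`
students and `m` colleges.  Strict preferences are encoded by injective rank
functions (a smaller rank means more preferred); `none` is the outside option
`0` (being unmatched / an unfilled position). -/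
structure Market (n m : ℕ) where
  quota : Fin m → ℕ
  sRank : Fin n → Option (Fin m) → ℕ
  sRank_inj : ∀ i, Function.Injective (sRank i)
  cRank : Fin m → Option (Fin n) → ℕ
  cRank_inj : ∀ j, Function.Injective (cRank j)

namespace Market

variable {n m : ℕ}

/-- Student `i` strictly prefers `a` to `b`. -/
def sPref (M : Market n m) (i : Fin n) (a b : Option (Fin m)) : Prop :=
  M.sRank i a < M.sRank i b

/-- College `j` strictly prefers `a` to `b`. -/
def cPref (M : Market n m) (j : Fin m) (a b : Option (Fin n)) : Prop :=
  M.cRank j a < M.cRank j b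

/-- The set `μ⁻¹(j)` of students matched to college `j` under `μ`. -/
def assigned (M : Market n m) (μ : Fin n → Option (Fin m)) (j : Fin m) : Finset (Fin n) :=
  Finset.univ.filter fun i => μ i = some j

/-- `μ` is a (capacity-feasible) matching: `|μ⁻¹(j)| ≤ q_j` for every college. -/
def IsMatching (M : Market n m) (μ : Fin n → Option (Fin m)) : Prop :=
  ∀ j, (M.assigned μ j).card ≤ M.quota j

/-- Individual rationality of `μ`. -/
def IndRational (M : Market n m) (μ : Fin n → Option (Fin m)) : Prop :=
  (∀ i, ¬ M.sPref i none (μ i)) ∧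
  (∀ j i', μ i' = some j → ¬ M.cPref j none (some i'))

/-- `(i, j)` is a blocking pair for `μ`. -/
def Blocks (M : Market n m) (μ : Fin n → Option (Fin m)) (i : Fin n) (j : Fin m) : Prop :=
  M.sPref i (some j) (μ i) ∧
  (((M.assigned μ j).card < M.quota j ∧ M.cPref j (some i) none) ∨
   ((M.assigned μ j).card = M.quota j ∧ ∃ i' ∈ M.assigned μ j, M.cPref j (some i) (some i')))

/-- `μ` is stable: individually rational with no blocking pair. -/
def Stable (M : Market n m) (μ : Fin n → Option (Fin m)) : Prop :=
  M.IndRational μ ∧ ∀ i j, ¬ M.Blocks μ i j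

/-- `μ` is envy-free: individually rational and any blocking pair involves an
unmatched student. -/
def EnvyFree (M : Market n m) (μ : Fin n → Option (Fin m)) : Prop :=
  M.IndRational μ ∧ ∀ i j, M.Blocks μ i j → μ i = none

/-- `μ` is 1-envy-free: envy-free, and either stable or there is one and only
one student who belongs to every blocking pair. -/
def OneEnvyFree (M : Market n m) (μ : Fin n → Option (Fin m)) : Prop :=
  M.EnvyFree μ ∧ (M.Stable μ ∨ ∃! i : Fin n, ∀ i' j, M.Blocks μ i' j → i' = i)

/-- `(i, j)` is a student-maximal blocking pair: `j` is `i`'s most preferred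
college among those with whom `i` forms a blocking pair. -/
def StudentMaxBlock (M : Market n m) (μ : Fin n → Option (Fin m)) (i : Fin n) (j : Fin m) :
    Prop :=
  M.Blocks μ i j ∧ ∀ j', M.Blocks μ i j' → M.sRank i (some j) ≤ M.sRank i (some j')

/-- `T` is the re-stabilization operator: on a 1-envy-free matching with no
blocking pair it is the identity; otherwise it satisfies the unique
student-maximal blocking pair `(i, j)`, matching `i` to `j`, keeping everyone
not matched to `j` unchanged, keeping the students of `j` if `j` has a vacancy
or if they are not `j`'s worst current student, and unmatching `j`'s worst
current student otherwise. -/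
def IsTStep (M : Market n m) (T : (Fin n → Option (Fin m)) → Fin n → Option (Fin m)) : Prop :=
  ∀ μ, M.IsMatching μ → M.OneEnvyFree μ →
    ((∀ i j, ¬ M.Blocks μ i j) → T μ = μ) ∧
    ∀ i j, M.StudentMaxBlock μ i j →
      T μ i = some j ∧
      ∀ i', i' ≠ i →
        (μ i' ≠ some j → T μ i' = μ i') ∧
        (μ i' = some j →
          ((M.assigned μ j).card < M.quota j → T μ i' = μ i') ∧
          ((M.assigned μ j).card = M.quota j →
            ((∃ i'' ∈ M.assigned μ j, M.cPref j (some i') (some i'')) → T μ i' = μ i') ∧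
            ((∀ i'' ∈ M.assigned μ j, i'' ≠ i' → M.cPref j (some i'') (some i')) →
              T μ i' = none)))

/-- `Tstar` iterates `T` finitely many times from any 1-envy-free matching
until a fixed point of `T` is reached. -/
def IsTStarOf (M : Market n m) (T Tstar : (Fin n → Option (Fin m)) → Fin n → Option (Fin m)) :
    Prop :=
  ∀ μ, M.IsMatching μ → M.OneEnvyFree μ →
    ∃ r : ℕ, Tstar μ = T^[r] μ ∧ T (Tstar μ) = Tstar μ

/-- A one-step responsive improvement for college `j`: `A` is obtained from `B`
either by filling a vacancy with an acceptable student, or by swapping a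
student of `B` for a strictly preferred outside student. -/
def SwapImproves (M : Market n m) (j : Fin m) (A B : Finset (Fin n)) : Prop :=
  (∃ i₁, i₁ ∉ B ∧ A = insert i₁ B ∧ M.cPref j (some i₁) none) ∨
  (∃ i₁ i₂, i₂ ∈ B ∧ i₁ ∉ B ∧ A = insert i₁ (B.erase i₂) ∧ M.cPref j (some i₁) (some i₂))

/-- The responsive extension of college `j`'s strict preference to sets of
students: the transitive closure of one-step responsive improvements. -/
def SetPref (M : Market n m) (j : Fin m) (A B : Finset (Fin n)) : Prop :=
  Relation.TransGen (M.SwapImproves j) A B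

/-- `μ₁ ≿ μ₂`: every college either gets the same set of students or a
strictly (responsively) preferred set. -/
def CollegesWeakPref (M : Market n m) (μ₁ μ₂ : Fin n → Option (Fin m)) : Prop :=
  ∀ j, M.assigned μ₁ j = M.assigned μ₂ j ∨ M.SetPref j (M.assigned μ₁ j) (M.assigned μ₂ j)

/-- `μ` is the student-optimal stable matching: a stable matching that every
student weakly prefers to any other stable matching. -/
def IsSOSM (M : Market n m) (μ : Fin n → Option (Fin m)) : Prop :=
  M.IsMatching μ ∧ M.Stable μ ∧
    ∀ μ', M.IsMatching μ' → M.Stable μ' → ∀ i, M.sRank i (μ i) ≤ M.sRank i (μ' i)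

/-- `μ` (with student `i` unmatched) is a stable matching of the market in
which student `i` has been removed. -/
def StableAway (M : Market n m) (i : Fin n) (μ : Fin n → Option (Fin m)) : Prop :=
  μ i = none ∧
  (∀ i', i' ≠ i → ¬ M.sPref i' none (μ i')) ∧
  (∀ j i', i' ≠ i → μ i' = some j → ¬ M.cPref j none (some i')) ∧
  (∀ i' j, i' ≠ i → ¬ M.Blocks μ i' j)

/-- `μ` (with student `i` unmatched) is the student-optimal stable matching of
the market in which student `i` has been removed. -/
def IsSOSMAway (M : Market n m) (i : Fin n) (μ : Fin n → Option (Fin m)) : Prop :=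
  M.IsMatching μ ∧ M.StableAway i μ ∧
    ∀ μ', M.IsMatching μ' → M.StableAway i μ' →
      ∀ i', i' ≠ i → M.sRank i' (μ i') ≤ M.sRank i' (μ' i')

/-- The maximum rank difference `h(w)` among the colleges' preferences: the
largest rank gap `|w_j(i₁) − w_j(i₂)|` over colleges `j` and pairs `(i₁, i₂)`
on whose relative ranking at least two colleges disagree (`0` if there is no
disagreement). -/
def maxRankDiff (M : Market n m) : ℕ :=
  Finset.univ.sup fun j : Fin m =>
    (Finset.univ.filter fun q : Option (Fin n) × Option (Fin n) =>
        ∃ j₁ j₂ : Fin m, M.cPref j₁ q.1 q.2 ∧ M.cPref j₂ q.2 q.1).sup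
      fun q => ((M.cRank j q.1 : ℤ) - (M.cRank j q.2 : ℤ)).natAbs

/-- `N*_{j,1}(μ) = μ⁻¹(j) \ μ*⁻¹(j)` : students of `j` under `μ` but not `μs`. -/
def Nset1 (M : Market n m) (μ μs : Fin n → Option (Fin m)) (j : Fin m) : Finset (Fin n) :=
  M.assigned μ j \ M.assigned μs j

/-- `N*_{j,0}(μ) = μ*⁻¹(j) \ μ⁻¹(j)` : students of `j` under `μs` but not `μ`. -/
def Nset0 (M : Market n m) (μ μs : Fin n → Option (Fin m)) (j : Fin m) : Finset (Fin n) :=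
  M.assigned μs j \ M.assigned μ j

/-- The rank `r_{j,i}(A)` of student `i` within the set `A` according to `≻_j`. -/
def rankIn (M : Market n m) (j : Fin m) (i : Fin n) (A : Finset (Fin n)) : ℕ :=
  (A.filter fun i' => M.cPref j (some i') (some i)).card + 1

/-- `a ▷_j b`: student `a` displaces student `b` from college `j` (as we move
from the SOSM `μs` to the stable matching `μ`). -/
def Displaces (M : Market n m) (μ μs : Fin n → Option (Fin m)) (j : Fin m) (a b : Fin n) :
    Prop :=
  a ∈ M.Nset1 μ μs j ∧ b ∈ M.Nset0 μ μs j ∧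
    M.rankIn j a (M.Nset1 μ μs j) = M.rankIn j b (M.Nset0 μ μs j)

/-- `a ▷ b`: `a` displaces `b` from some college. -/
def DisplacesAny (M : Market n m) (μ μs : Fin n → Option (Fin m)) (a b : Fin n) : Prop :=
  ∃ j, M.Displaces μ μs j a b

/-- The positions of the related one-to-one market: college `j` is split into
`q_j` ordered positions. -/
abbrev Position (M : Market n m) : Type := (j : Fin m) × Fin (M.quota j)

/-- Student `i`'s strict preference over positions in the related one-to-one
market: positions of strictly better colleges are better, and within a college
a smaller index is better. -/
def PosBetter (M : Market n m) (i : Fin n) :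
    Option (Position M) → Option (Position M) → Prop
  | some q, some q' =>
      M.sRank i (some q.1) < M.sRank i (some q'.1) ∨ (q.1 = q'.1 ∧ (q.2 : ℕ) < (q'.2 : ℕ))
  | some q, none => M.sRank i (some q.1) < M.sRank i none
  | none, some q' => M.sRank i none < M.sRank i (some q'.1)
  | none, none => False

/-- `(μN, μM)` is the one-to-one matching of the related market corresponding
to the many-to-one matching `μ`: the students of `μ⁻¹(j)` occupy, in the order
of college `j`'s preference, the ordered positions of `j`. -/
def Corresponds (M : Market n m) (μ : Fin n → Option (Fin m))
    (μN : Fin n → Option (Position M)) (μM : Position M → Option (Fin n)) : Prop :=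
  (∀ i p, μN i = some p ↔ μM p = some i) ∧
  (∀ i j, (∃ s, μN i = some ⟨j, s⟩) ↔ μ i = some j) ∧
  (∀ i j (s : Fin (M.quota j)), μN i = some ⟨j, s⟩ →
    (s : ℕ) = ((M.assigned μ j).filter fun i' => M.cPref j (some i') (some i)).card)

/-- `(i, p)` is a blocking pair in the related one-to-one market. -/
def PosBlocks (M : Market n m) (μN : Fin n → Option (Position M))
    (μM : Position M → Option (Fin n)) (i : Fin n) (p : Position M) : Prop :=
  M.PosBetter i (some p) (μN i) ∧ M.cPref p.1 (some i) (μM p)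

/-- Individual rationality in the related one-to-one market. -/
def PosIR (M : Market n m) (μN : Fin n → Option (Position M))
    (μM : Position M → Option (Fin n)) : Prop :=
  (∀ i, ¬ M.PosBetter i none (μN i)) ∧ (∀ p : Position M, ¬ M.cPref p.1 none (μM p))

/-- Stability in the related one-to-one market. -/
def PosStable (M : Market n m) (μN : Fin n → Option (Position M))
    (μM : Position M → Option (Fin n)) : Prop :=
  M.PosIR μN μM ∧ ∀ i p, ¬ M.PosBlocks μN μM i p

/-- Simplicity in the related one-to-one market: individually rational and any
blocking pair involves an unmatched student. -/
def PosSimple (M : Market n m) (μN : Fin n → Option (Position M))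
    (μM : Position M → Option (Fin n)) : Prop :=
  M.PosIR μN μM ∧ ∀ i p, M.PosBlocks μN μM i p → μN i = none

/-- 1-simplicity in the related one-to-one market: simple, and either stable or
there is one and only one student belonging to every blocking pair. -/
def PosOneSimple (M : Market n m) (μN : Fin n → Option (Position M))
    (μM : Position M → Option (Fin n)) : Prop :=
  M.PosSimple μN μM ∧
    (M.PosStable μN μM ∨ ∃! i : Fin n, ∀ i' p, M.PosBlocks μN μM i' p → i' = i)

end Market

/-- A generic one-to-one matching market with `n` students and `p` positions,
with strict preferences encoded by injective rank functions. -/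
structure OOMarket (n p : ℕ) where
  sRank : Fin n → Option (Fin p) → ℕ
  sRank_inj : ∀ i, Function.Injective (sRank i)
  pRank : Fin p → Option (Fin n) → ℕ
  pRank_inj : ∀ c, Function.Injective (pRank c)

namespace OOMarket

variable {n p : ℕ}

/-- `(μN, μM)` is a one-to-one matching. -/
def IsOOMatching (O : OOMarket n p) (μN : Fin n → Option (Fin p))
    (μM : Fin p → Option (Fin n)) : Prop :=
  ∀ i c, μN i = some c ↔ μM c = some i

/-- `(i, c)` is a blocking pair for `(μN, μM)`. -/
def OOBlocks (O : OOMarket n p) (μN : Fin n → Option (Fin p))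
    (μM : Fin p → Option (Fin n)) (i : Fin n) (c : Fin p) : Prop :=
  O.sRank i (some c) < O.sRank i (μN i) ∧ O.pRank c (some i) < O.pRank c (μM c)

/-- Individual rationality. -/
def OOIR (O : OOMarket n p) (μN : Fin n → Option (Fin p))
    (μM : Fin p → Option (Fin n)) : Prop :=
  (∀ i, ¬ O.sRank i none < O.sRank i (μN i)) ∧ (∀ c, ¬ O.pRank c none < O.pRank c (μM c))

/-- Stability. -/
def OOStable (O : OOMarket n p) (μN : Fin n → Option (Fin p))
    (μM : Fin p → Option (Fin n)) : Prop :=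
  O.OOIR μN μM ∧ ∀ i c, ¬ O.OOBlocks μN μM i c

/-- Simplicity: individually rational and every blocking pair involves an
unmatched student. -/
def OOSimple (O : OOMarket n p) (μN : Fin n → Option (Fin p))
    (μM : Fin p → Option (Fin n)) : Prop :=
  O.OOIR μN μM ∧ ∀ i c, O.OOBlocks μN μM i c → μN i = none

/-- 1-simplicity: simple, and either stable or there is one and only one
student belonging to every blocking pair. -/
def OOOneSimple (O : OOMarket n p) (μN : Fin n → Option (Fin p))
    (μM : Fin p → Option (Fin n)) : Prop :=
  O.OOSimple μN μM ∧
    (O.OOStable μN μM ∨ ∃! i : Fin n, ∀ i' c, O.OOBlocks μN μM i' c → i' = i)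

end OOMarket

end

/-!
Split every college `j` into `q_j` positions and seat the students of `ν⁻¹(j)` in them in the
order of `j`'s preference. For two envy-free matchings `ν₁`, `ν₂`, start at a position filled
under `ν₁` but not under `ν₂` and repeatedly jump to the `ν₂`-position of the current
`ν₁`-occupant. Envy-freeness of both matchings keeps the invariant "the college prefers the
`ν₁`-occupant to the `ν₂`-occupant", and the jump is a partial injection of a finite set, so
distinct starts end at distinct positions whose `ν₁`-occupant is unmatched under `ν₂` and blocks
it. A stable `μ` has no blocking student, so `μ` fills every position the 1-envy-free `μ'`
fills; `μ'` has at most one blocking student, so `μ` fills at most one position more.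
-/

open Finset

noncomputable section

theorem card_sources_le_card_sinks {α : Type*} (F : α → Option α)
    (hF : ∀ a b c, F a = some c → F b = some c → a = b) (P : Finset α)
    (hP : ∀ a ∈ P, ∀ b, F a = some b → b ∈ P) :
    #{a ∈ P | ∀ b, F b ≠ some a} ≤ #{a ∈ P | F a = none} := by
  have hdefined : #{a ∈ P | ¬ F a = none} ≤ #{a ∈ P | ¬ ∀ b, F b ≠ some a} := by
    refine card_le_card_of_forall_subsingleton (fun a b => F a = some b) ?_ ?_
    · intro a ha
      simp only [mem_filter] at ha
      obtain ⟨b, hb⟩ := Option.ne_none_iff_exists'.1 ha.2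
      exact ⟨b, mem_filter.2 ⟨hP a ha.1 b hb, fun h => h a hb⟩, hb⟩
    · intro b _ a₁ h₁ a₂ h₂
      exact hF a₁ a₂ b h₁.2 h₂.2
  have hsinks := card_filter_add_card_filter_not (s := P) (fun a => F a = none)
  have hsources := card_filter_add_card_filter_not (s := P) (fun a => ∀ b, F b ≠ some a)
  omega

namespace Market

variable {n m : ℕ} (M : Market n m)

lemma mem_assigned {ν : Fin n → Option (Fin m)} {j : Fin m} {i : Fin n} :
    i ∈ M.assigned ν j ↔ ν i = some j := by
  simp [assigned]

def posIdx (ν : Fin n → Option (Fin m)) (j : Fin m) (i : Fin n) : ℕ :=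
  #{i' ∈ M.assigned ν j | M.cPref j (some i') (some i)}

def posOf (ν : Fin n → Option (Fin m)) (i : Fin n) : Option M.Position :=
  (ν i).bind fun j => if h : M.posIdx ν j i < M.quota j then some ⟨j, ⟨_, h⟩⟩ else none

def occupant (ν : Fin n → Option (Fin m)) (p : M.Position) : Option (Fin n) :=
  if h : ∃ i, ν i = some p.1 ∧ M.posIdx ν p.1 i = p.2 then some h.choose else none

def extraPositions (ν₁ ν₂ : Fin n → Option (Fin m)) : Finset M.Position :=
  {p | M.occupant ν₁ p ≠ none ∧ M.occupant ν₂ p = none}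

def blockers (ν : Fin n → Option (Fin m)) : Finset (Fin n) :=
  {i | ∃ j, M.Blocks ν i j}

variable {M} {ν : Fin n → Option (Fin m)} {j : Fin m}

lemma posIdx_lt_posIdx {a b : Fin n} (ha : ν a = some j) (h : M.cPref j (some a) (some b)) :
    M.posIdx ν j a < M.posIdx ν j b := by
  refine card_lt_card ((ssubset_iff_of_subset fun x hx => ?_).2 ⟨a, ?_, ?_⟩)
  · simp only [mem_filter] at hx ⊢
    exact ⟨hx.1, hx.2.trans h⟩
  · exact mem_filter.2 ⟨M.mem_assigned.2 ha, h⟩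
  · exact fun h' => lt_irrefl _ (mem_filter.1 h').2

lemma posIdx_lt_card {i : Fin n} (h : ν i = some j) :
    M.posIdx ν j i < #(M.assigned ν j) :=
  card_lt_card ((ssubset_iff_of_subset (filter_subset _ _)).2
    ⟨i, M.mem_assigned.2 h, fun h => lt_irrefl _ (mem_filter.1 h).2⟩)

lemma posIdx_injOn : Set.InjOn (M.posIdx ν j) (M.assigned ν j) := by
  intro a ha b hb hab
  by_contra hne
  have hrank : M.cRank j (some a) ≠ M.cRank j (some b) := fun h =>
    hne (Option.some.inj (M.cRank_inj j h))
  rcases lt_or_gt_of_ne hrank with h | h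
  · exact (posIdx_lt_posIdx (M.mem_assigned.1 ha) h).ne hab
  · exact (posIdx_lt_posIdx (M.mem_assigned.1 hb) h).ne hab.symm

lemma image_posIdx : (M.assigned ν j).image (M.posIdx ν j) = range #(M.assigned ν j) := by
  refine eq_of_subset_of_card_le (fun s hs => ?_) ?_
  · obtain ⟨i, hi, rfl⟩ := mem_image.1 hs
    exact mem_range.2 (posIdx_lt_card (M.mem_assigned.1 hi))
  · rw [card_image_of_injOn posIdx_injOn, card_range]

variable {p : M.Position} {i : Fin n}

lemma occupant_eq_some_iff :
    M.occupant ν p = some i ↔ ν i = some p.1 ∧ M.posIdx ν p.1 i = p.2 := by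
  unfold occupant
  split_ifs with h
  · refine ⟨fun hi => Option.some.inj hi ▸ h.choose_spec, fun hi => congrArg some ?_⟩
    exact posIdx_injOn (M.mem_assigned.2 h.choose_spec.1) (M.mem_assigned.2 hi.1)
      (h.choose_spec.2.trans hi.2.symm)
  · exact ⟨fun hi => (nomatch hi), fun hi => absurd ⟨i, hi⟩ h⟩

lemma occupant_eq_none_iff : M.occupant ν p = none ↔ #(M.assigned ν p.1) ≤ p.2 := by
  rw [← not_lt, ← mem_range, ← image_posIdx, Option.eq_none_iff_forall_ne_some]
  simp only [ne_eq, occupant_eq_some_iff, mem_image, mem_assigned, not_exists, not_and]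

lemma posOf_eq_some_iff : M.posOf ν i = some p ↔ M.occupant ν p = some i := by
  rw [occupant_eq_some_iff]
  obtain ⟨j, s⟩ := p
  unfold posOf
  cases ν i with
  | none => simp
  | some j' =>
    simp only [Option.bind_some]
    split_ifs with h
    · simp only [Option.some.injEq, Sigma.ext_iff]
      exact and_congr_right fun hj => by subst hj; simp [Fin.ext_iff]
    · exact iff_of_false (nomatch ·) fun ⟨hj, hs⟩ => by
        obtain rfl := Option.some.inj hj
        exact h (hs ▸ s.isLt)

lemma posOf_eq_none_iff (hν : M.IsMatching ν) : M.posOf ν i = none ↔ ν i = none := by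
  unfold posOf
  cases hi : ν i with
  | none => simp
  | some j => simpa using (posIdx_lt_card hi).trans_le (hν j)

lemma occupant_ne_none_iff {s : Fin (M.quota j)} :
    M.occupant ν ⟨j, s⟩ ≠ none ↔ s < #(M.assigned ν j) :=
  occupant_eq_none_iff.not.trans not_le

lemma mem_extraPositions {ν₁ ν₂ : Fin n → Option (Fin m)} {s : Fin (M.quota j)} :
    ⟨j, s⟩ ∈ M.extraPositions ν₁ ν₂ ↔ #(M.assigned ν₂ j) ≤ s ∧ s < #(M.assigned ν₁ j) := by
  rw [extraPositions, mem_filter, occupant_ne_none_iff, occupant_eq_none_iff]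
  exact ⟨fun h => ⟨h.2.2, h.2.1⟩, fun h => ⟨mem_univ _, h.2, h.1⟩⟩

lemma IndRational.sPref_some_none (hIR : M.IndRational ν) (h : ν i = some j) :
    M.sPref i (some j) none :=
  lt_of_le_of_ne (not_lt.1 (h ▸ hIR.1 i)) fun e => nomatch M.sRank_inj i e

lemma IndRational.cPref_some_none (hIR : M.IndRational ν) (h : ν i = some j) :
    M.cPref j (some i) none :=
  lt_of_le_of_ne (not_lt.1 (hIR.2 j i h)) fun e => nomatch M.cRank_inj j e

lemma posBetter_or_posBetter (i : Fin n) {p q : M.Position} (hpq : p ≠ q) :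
    M.PosBetter i (some p) (some q) ∨ M.PosBetter i (some q) (some p) := by
  obtain ⟨j, s⟩ := p
  obtain ⟨j', s'⟩ := q
  by_cases hj : j = j'
  · subst hj
    have hs : (s : ℕ) ≠ s' := fun h => hpq (by rw [Fin.ext h])
    rcases lt_or_gt_of_ne hs with h | h
    · exact Or.inl (Or.inr ⟨rfl, h⟩)
    · exact Or.inr (Or.inr ⟨rfl, h⟩)
  · have hr : M.sRank i (some j) ≠ M.sRank i (some j') := fun h =>
      hj (Option.some.inj (M.sRank_inj i h))
    rcases lt_or_gt_of_ne hr with h | h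
    · exact Or.inl (Or.inl h)
    · exact Or.inr (Or.inl h)

lemma sPref_of_posBlocks (hν : M.IsMatching ν)
    (h : M.PosBlocks (M.posOf ν) (M.occupant ν) i p) : M.sPref i (some p.1) (ν i) := by
  obtain ⟨hbetter, hpref⟩ := h
  obtain ⟨j, s⟩ := p
  cases hpos : M.posOf ν i with
  | none =>
    rw [hpos] at hbetter
    rwa [(posOf_eq_none_iff hν).1 hpos]
  | some q =>
    obtain ⟨j', s'⟩ := q
    obtain ⟨hi, hq⟩ : ν i = some j' ∧ M.posIdx ν j' i = s' :=
      occupant_eq_some_iff.1 (posOf_eq_some_iff.1 hpos)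
    rw [hpos] at hbetter
    rcases hbetter with hbetter | ⟨hjj', hlt⟩
    · rwa [hi]
    · obtain rfl : j = j' := hjj'
      replace hlt : (s : ℕ) < s' := hlt
      -- `j`'s occupant at the better position `s` would rank below `i`
      have hs : (s : ℕ) < #(M.assigned ν j) := hlt.trans (hq ▸ posIdx_lt_card hi)
      obtain ⟨i', hi'⟩ := Option.ne_none_iff_exists'.1 (occupant_ne_none_iff.2 hs)
      have hi's : M.posIdx ν j i' = s := (occupant_eq_some_iff.1 hi').2
      rw [hi'] at hpref
      have : M.posIdx ν j i < M.posIdx ν j i' := posIdx_lt_posIdx hi hpref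
      omega

lemma collegeBlocks_of_cPref_occupant (hν : M.IsMatching ν) (hIR : M.IndRational ν)
    (h : M.cPref p.1 (some i) (M.occupant ν p)) :
    (#(M.assigned ν p.1) < M.quota p.1 ∧ M.cPref p.1 (some i) none) ∨
      (#(M.assigned ν p.1) = M.quota p.1 ∧
        ∃ i' ∈ M.assigned ν p.1, M.cPref p.1 (some i) (some i')) := by
  cases hocc : M.occupant ν p with
  | none =>
    rw [hocc] at h
    exact Or.inl ⟨(occupant_eq_none_iff.1 hocc).trans_lt p.2.isLt, h⟩
  | some i' =>
    rw [hocc] at h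
    have hi' := (occupant_eq_some_iff.1 hocc).1
    rcases (hν p.1).lt_or_eq with hvac | hfull
    · exact Or.inl ⟨hvac, h.trans (hIR.cPref_some_none hi')⟩
    · exact Or.inr ⟨hfull, i', M.mem_assigned.2 hi', h⟩

lemma blocks_of_posBlocks (hν : M.IsMatching ν) (hIR : M.IndRational ν)
    (h : M.PosBlocks (M.posOf ν) (M.occupant ν) i p) : M.Blocks ν i p.1 :=
  ⟨sPref_of_posBlocks hν h, collegeBlocks_of_cPref_occupant hν hIR h.2⟩

section Chain

variable {ν₁ ν₂ : Fin n → Option (Fin m)}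

lemma exists_occupant_cPref_of_posOf (hν₁ : M.IsMatching ν₁) (hν₂ : M.IsMatching ν₂)
    (hef₁ : M.EnvyFree ν₁) (hef₂ : M.EnvyFree ν₂) {a b : M.Position}
    (hia : M.occupant ν₁ a = some i) (hpref : M.cPref a.1 (some i) (M.occupant ν₂ a))
    (hib : M.posOf ν₂ i = some b) :
    ∃ i', M.occupant ν₁ b = some i' ∧ M.cPref b.1 (some i') (M.occupant ν₂ b) := by
  have hb : M.occupant ν₂ b = some i := posOf_eq_some_iff.1 hib
  have ha : M.posOf ν₁ i = some a := posOf_eq_some_iff.2 hia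
  have hi₁ : ν₁ i = some a.1 := (occupant_eq_some_iff.1 hia).1
  have hi₂ : ν₂ i = some b.1 := (occupant_eq_some_iff.1 hb).1
  have hab : a ≠ b := by
    rintro rfl
    rw [hb] at hpref
    exact lt_irrefl _ hpref
  have hba : M.PosBetter i (some b) (some a) := by
    refine (posBetter_or_posBetter i hab).resolve_left fun h => ?_
    have := hef₂.2 i a.1 (blocks_of_posBlocks hν₂ hef₂.1 ⟨hib ▸ h, hpref⟩)
    rw [hi₂] at this
    exact nomatch this
  have hnot : ¬ M.cPref b.1 (some i) (M.occupant ν₁ b) := fun h => by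
    have := hef₁.2 i b.1 (blocks_of_posBlocks hν₁ hef₁.1 ⟨ha ▸ hba, h⟩)
    rw [hi₁] at this
    exact nomatch this
  cases hocc : M.occupant ν₁ b with
  | none => exact absurd (hocc ▸ hef₂.1.cPref_some_none hi₂) hnot
  | some i' =>
    have hi' : i' ≠ i := by
      rintro rfl
      exact hab (Option.some.inj (ha.symm.trans (posOf_eq_some_iff.2 hocc)))
    rw [hocc] at hnot
    rw [hb]
    exact ⟨i', rfl, lt_of_le_of_ne (not_lt.1 hnot) fun e => hi' (Option.some.inj (M.cRank_inj _ e))⟩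

theorem card_extraPositions_le_card_blockers (hν₁ : M.IsMatching ν₁)
    (hν₂ : M.IsMatching ν₂) (hef₁ : M.EnvyFree ν₁) (hef₂ : M.EnvyFree ν₂) :
    #(M.extraPositions ν₁ ν₂) ≤ #(M.blockers ν₂) := by
  set F : M.Position → Option M.Position := fun p => (M.occupant ν₁ p).bind (M.posOf ν₂)
  set P : Finset M.Position :=
    {p | ∃ i, M.occupant ν₁ p = some i ∧ M.cPref p.1 (some i) (M.occupant ν₂ p)}
  have hF : ∀ a b c, F a = some c → F b = some c → a = b := by
    intro a b c ha hb
    obtain ⟨ia, hia, hac⟩ := Option.bind_eq_some_iff.1 ha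
    obtain ⟨ib, hib, hbc⟩ := Option.bind_eq_some_iff.1 hb
    obtain rfl : ia = ib := Option.some.inj
      ((posOf_eq_some_iff.1 hac).symm.trans (posOf_eq_some_iff.1 hbc))
    exact Option.some.inj ((posOf_eq_some_iff.2 hia).symm.trans (posOf_eq_some_iff.2 hib))
  have hP : ∀ a ∈ P, ∀ b, F a = some b → b ∈ P := by
    intro a ha b hab
    obtain ⟨i, hia, hpref⟩ := (mem_filter.1 ha).2
    obtain ⟨i', hi', hib⟩ := Option.bind_eq_some_iff.1 hab
    obtain rfl : i = i' := Option.some.inj (hia.symm.trans hi')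
    exact mem_filter.2 ⟨mem_univ _,
      exists_occupant_cPref_of_posOf hν₁ hν₂ hef₁ hef₂ hia hpref hib⟩
  calc #(M.extraPositions ν₁ ν₂)
      ≤ #{p ∈ P | ∀ b, F b ≠ some p} := by
        refine card_le_card fun p hp => ?_
        obtain ⟨hp₁, hp₂⟩ := (mem_filter.1 hp).2
        obtain ⟨i, hi⟩ := Option.ne_none_iff_exists'.1 hp₁
        refine mem_filter.2 ⟨mem_filter.2 ⟨mem_univ _, i, hi, ?_⟩, fun b hb => ?_⟩
        · rw [hp₂]
          exact hef₁.1.cPref_some_none (occupant_eq_some_iff.1 hi).1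
        · obtain ⟨i', -, hi'⟩ := Option.bind_eq_some_iff.1 hb
          rw [posOf_eq_some_iff, hp₂] at hi'
          exact nomatch hi'
    _ ≤ #{p ∈ P | F p = none} := by convert card_sources_le_card_sinks F hF P hP
    _ ≤ #(M.blockers ν₂) := by
        refine card_le_card_of_forall_subsingleton (fun p i => M.occupant ν₁ p = some i) ?_ ?_
        · intro p hp
          obtain ⟨hpP, hFp⟩ := mem_filter.1 hp
          obtain ⟨i, hi, hpref⟩ := (mem_filter.1 hpP).2
          simp only [F, hi, Option.bind_some] at hFp
          -- the last student of the chain is unmatched under `ν₂` and envies the position `p`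
          refine ⟨i, mem_filter.2 ⟨mem_univ _, p.1, blocks_of_posBlocks hν₂ hef₂.1 ⟨?_, hpref⟩⟩, hi⟩
          rw [hFp]
          exact hef₁.1.sPref_some_none (occupant_eq_some_iff.1 hi).1
        · intro i _ a ha b hb
          exact Option.some.inj ((posOf_eq_some_iff.2 ha.2).symm.trans (posOf_eq_some_iff.2 hb.2))

end Chain

lemma Stable.envyFree (h : M.Stable ν) : M.EnvyFree ν :=
  ⟨h.1, fun i j hb => absurd hb (h.2 i j)⟩

lemma Stable.blockers_eq_empty (h : M.Stable ν) : M.blockers ν = ∅ :=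
  filter_eq_empty_iff.2 fun i _ ⟨j, hb⟩ => h.2 i j hb

lemma OneEnvyFree.card_blockers_le_one (h : M.OneEnvyFree ν) : #(M.blockers ν) ≤ 1 := by
  rcases h.2 with hst | ⟨i₀, hi₀, -⟩
  · simp [hst.blockers_eq_empty]
  · refine card_le_one.2 fun a ha b hb => ?_
    obtain ⟨ja, hja⟩ := (mem_filter.1 ha).2
    obtain ⟨jb, hjb⟩ := (mem_filter.1 hb).2
    exact (hi₀ a ja hja).trans (hi₀ b jb hjb).symm

section StableVsOneEnvyFree

variable {μ μ' : Fin n → Option (Fin m)}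

lemma card_assigned_le_of_stable (hμ : M.IsMatching μ) (hst : M.Stable μ)
    (hμ' : M.IsMatching μ') (hef : M.EnvyFree μ') (j : Fin m) :
    #(M.assigned μ' j) ≤ #(M.assigned μ j) := by
  by_contra! hlt
  have hnone := card_extraPositions_le_card_blockers hμ' hμ hef hst.envyFree
  rw [hst.blockers_eq_empty, card_empty, Nat.le_zero, card_eq_zero] at hnone
  exact eq_empty_iff_forall_notMem.1 hnone ⟨j, ⟨_, hlt.trans_le (hμ' j)⟩⟩
    (mem_extraPositions.2 ⟨le_rfl, hlt⟩)

lemma eq_of_excess_positions (hμ : M.IsMatching μ) (hst : M.Stable μ)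
    (hμ' : M.IsMatching μ') (h1 : M.OneEnvyFree μ') {j₁ j₂ : Fin m} {s₁ s₂ : ℕ}
    (h₁ : #(M.assigned μ' j₁) ≤ s₁) (h₁' : s₁ < #(M.assigned μ j₁))
    (h₂ : #(M.assigned μ' j₂) ≤ s₂) (h₂' : s₂ < #(M.assigned μ j₂)) :
    j₁ = j₂ ∧ s₁ = s₂ := by
  have hle := (card_extraPositions_le_card_blockers hμ hμ' hst.envyFree h1.1).trans
    h1.card_blockers_le_one
  have heq := card_le_one.1 hle ⟨j₁, ⟨s₁, h₁'.trans_le (hμ j₁)⟩⟩ (mem_extraPositions.2 ⟨h₁, h₁'⟩)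
    ⟨j₂, ⟨s₂, h₂'.trans_le (hμ j₂)⟩⟩ (mem_extraPositions.2 ⟨h₂, h₂'⟩)
  simp only [Sigma.mk.injEq] at heq
  obtain ⟨rfl, hs⟩ := heq
  exact ⟨rfl, by simpa [Fin.ext_iff] using hs⟩

end StableVsOneEnvyFree

end Market

end

/-- comparing a stable matching `μ` with a 1-envy-free matching
`μ'`, exactly one of the two cases holds: every college fills the same number
of positions, or exactly one college `j*` fills one extra position under `μ`
and all others fill the same number. -/
theorem stable_vs_oneEnvyFree_taxonomy {n m : ℕ} (M : Market n m)
    (μ μ' : Fin n → Option (Fin m))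
    (hμ : M.IsMatching μ) (hst : M.Stable μ)
    (hμ' : M.IsMatching μ') (h1 : M.OneEnvyFree μ') :
    Xor'
      (∀ j, (M.assigned μ j).card = (M.assigned μ' j).card)
      (∃ jstar : Fin m,
        (M.assigned μ jstar).card = (M.assigned μ' jstar).card + 1 ∧
        ∀ j, j ≠ jstar → (M.assigned μ j).card = (M.assigned μ' j).card) := by
  have hle := M.card_assigned_le_of_stable hμ hst hμ' h1.1
  by_cases hall : ∀ j, #(M.assigned μ j) = #(M.assigned μ' j)
  · exact Or.inl ⟨hall, fun ⟨j, hj, _⟩ => by have := hall j; omega⟩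
  obtain ⟨j₀, hj₀⟩ := not_forall.1 hall
  have hlt : #(M.assigned μ' j₀) < #(M.assigned μ j₀) := (hle j₀).lt_of_ne (Ne.symm hj₀)
  have hunique := fun j s (h : #(M.assigned μ' j) ≤ s) (h' : s < #(M.assigned μ j)) =>
    M.eq_of_excess_positions hμ hst hμ' h1 h h' le_rfl hlt
  refine Or.inr ⟨⟨j₀, ?_, fun j hj => ?_⟩, fun h => hj₀ (h j₀)⟩
  · by_contra
    have := (hunique j₀ (#(M.assigned μ' j₀) + 1) (by omega) (by omega)).2
    omega
  · by_contra
    exact hj (hunique j _ le_rfl (by have := hle j; omega)).1
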